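/- arXiv:2201.08223 — 4 statements merged into one kernel-verified Lean document; each statement's English description precedes it below -/
import Mathlib

section
/- Let θ : [0,1] × ℕ → [0,1], written θ_n(p), be nondecreasing in p and nonincreasing in n, and set θ(p) = lim_{n→∞} θ_n(p) (assumed to exist). Assume that for all p ∈ [0,1] and all m, n ≥ 1 one has θ_{2n}(p - 2θ_m(p)) ≤ C₀·θ_n(p)/2^{n/m} for some constant C₀ > 0, where θ_n(q) := 0 if q < 0. Define p_c = inf{p ∈ [0,1] : θ(p) > 0}. Then for every p ∈ (p_c, 1], θ(p) ≥ (p - p_c)/2. -/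
open Filter

theorem mean_field_lower_bound (θ : ℝ → ℕ → ℝ) (θlim : ℝ → ℝ) (C₀ : ℝ) (hC₀ : 0 < C₀)
    (hrange : ∀ p ∈ Set.Icc (0 : ℝ) 1, ∀ n, θ p n ∈ Set.Icc (0 : ℝ) 1)
    (hneg : ∀ q < (0 : ℝ), ∀ n, θ q n = 0)
    (hmono : ∀ n, Monotone (fun p => θ p n))
    (hanti : ∀ p, Antitone (θ p))
    (hlim : ∀ p, Tendsto (θ p) atTop (nhds (θlim p)))
    (hkey : ∀ p ∈ Set.Icc (0 : ℝ) 1, ∀ m n : ℕ, 1 ≤ m → 1 ≤ n →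
      θ (p - 2 * θ p m) (2 * n) ≤ C₀ * θ p n / 2 ^ ((n : ℝ) / m))
    (hne : ∃ p ∈ Set.Icc (0 : ℝ) 1, 0 < θlim p) :
    ∀ p ∈ Set.Ioc (sInf {p | p ∈ Set.Icc (0 : ℝ) 1 ∧ 0 < θlim p}) 1,
      (p - sInf {p | p ∈ Set.Icc (0 : ℝ) 1 ∧ 0 < θlim p}) / 2 ≤ θlim p := by
  set S : Set ℝ := {p | p ∈ Set.Icc (0 : ℝ) 1 ∧ 0 < θlim p} with hSdef
  obtain ⟨p₀, hp₀, hp₀pos⟩ := hne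
  have hSne : S.Nonempty := ⟨p₀, hp₀, hp₀pos⟩
  have hpc0 : 0 ≤ sInf S := le_csInf hSne fun r hr => hr.1.1
  have hlimmono : ∀ q r : ℝ, q ≤ r → θlim q ≤ θlim r := fun q r h =>
    le_of_tendsto_of_tendsto' (hlim q) (hlim r) fun n => hmono n h
  have hlimle : ∀ q : ℝ, ∀ k : ℕ, θlim q ≤ θ q k := fun q k =>
    le_of_tendsto (hlim q) (Filter.eventually_atTop.2 ⟨k, fun n hn => hanti q hn⟩)
  have key : ∀ p ∈ Set.Icc (0:ℝ) 1, ∀ m : ℕ, 1 ≤ m → p - 2 * θ p m ≤ sInf S := by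
    intro p hp m hm
    set q := p - 2 * θ p m with hqdef
    by_cases hq : 0 ≤ q
    · have hq1 : q ∈ Set.Icc (0:ℝ) 1 := by
        refine ⟨hq, ?_⟩
        have h1 := (hrange p hp m).1
        have h2 := hp.2
        simp only [hqdef]; linarith
      have hq0 : 0 ≤ θlim q := ge_of_tendsto' (hlim q) fun n => (hrange q hq1 n).1
      have hm' : (0:ℝ) < m := by exact_mod_cast hm
      have ha : (1:ℝ) < (2:ℝ) ^ ((1:ℝ)/m) := by
        rw [Real.one_lt_rpow_iff_of_pos (by norm_num)]
        exact Or.inl ⟨by norm_num, by positivity⟩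
      have hgt : Tendsto (fun n : ℕ => C₀ / ((2:ℝ)^((1:ℝ)/m))^n) atTop (nhds 0) :=
        tendsto_const_nhds.div_atTop (tendsto_pow_atTop_atTop_of_one_lt ha)
      have hle0 : θlim q ≤ 0 := by
        refine ge_of_tendsto hgt ?_
        filter_upwards [Filter.eventually_ge_atTop 1] with n hn
        have h2 := hkey p hp m n hm hn
        have h3 := (hrange p hp n).2
        have h4 := (hrange p hp n).1
        have hpow : ((2:ℝ)^((1:ℝ)/m))^n = (2:ℝ)^((n:ℝ)/m) := by
          rw [← Real.rpow_natCast ((2:ℝ)^((1:ℝ)/m)) n, ← Real.rpow_mul (by norm_num)]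
          ring_nf
        rw [hpow]
        have hp2 : (0:ℝ) < (2:ℝ)^((n:ℝ)/m) := Real.rpow_pos_of_pos (by norm_num) _
        calc θlim q ≤ θ q (2*n) := hlimle q (2*n)
          _ ≤ C₀ * θ p n / 2 ^ ((n:ℝ)/m) := h2
          _ ≤ C₀ / 2 ^ ((n:ℝ)/m) := by
              rw [div_le_div_iff₀ hp2 hp2]
              nlinarith [mul_nonneg (mul_nonneg hC₀.le (sub_nonneg.2 h3)) hp2.le]
      by_contra hcon
      push_neg at hcon
      obtain ⟨r, hrS, hrq⟩ := exists_lt_of_csInf_lt hSne hcon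
      have := hlimmono r q hrq.le
      linarith [hrS.2]
    · push_neg at hq
      linarith
  intro p hp
  have hp1 : p ∈ Set.Icc (0:ℝ) 1 := ⟨le_trans hpc0 hp.1.le, hp.2⟩
  refine ge_of_tendsto (hlim p) ?_
  filter_upwards [Filter.eventually_ge_atTop 1] with m hm
  have := key p hp1 m hm
  linarith
end

section
/- Let π : (0,1) × ℕ → (0,1], written π_n(p), be nonincreasing in n and nonincreasing in p in the sense that p ↦ π_n(p) is nonincreasing. Let π(p) = lim_{n→∞} π_n(p) and assume π_n(p·π_m(p)) ≥ π_n(p)/π_{n+m}(p) for all p ∈ (0,1) and m,n ≥ 1. Define p_c = sup{p : π(p) = 1}. Then for every p ∈ (p_c, 1), 1 - π(p) ≥ (p - p_c)/p. -/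
open Filter

theorem chayes_chayes_lower_bound (π : ℝ → ℕ → ℝ) (πlim : ℝ → ℝ)
    (hpos : ∀ p ∈ Set.Ioo (0 : ℝ) 1, ∀ n, 0 < π p n)
    (hle : ∀ p ∈ Set.Ioo (0 : ℝ) 1, ∀ n, π p n ≤ 1)
    (hmono : ∀ n, ∀ p ∈ Set.Ioo (0 : ℝ) 1, ∀ q ∈ Set.Ioo (0 : ℝ) 1,
      p ≤ q → π q n ≤ π p n)
    (hanti : ∀ p ∈ Set.Ioo (0 : ℝ) 1, Antitone (π p))
    (hlim : ∀ p ∈ Set.Ioo (0 : ℝ) 1, Tendsto (π p) atTop (nhds (πlim p)))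
    (hkey : ∀ p ∈ Set.Ioo (0 : ℝ) 1, ∀ m n : ℕ, 1 ≤ m → 1 ≤ n →
      π p n / π p (n + m) ≤ π (p * π p m) n) :
    ∀ p ∈ Set.Ioo (sSup {p | p ∈ Set.Ioo (0 : ℝ) 1 ∧ πlim p = 1}) 1,
      (p - sSup {p | p ∈ Set.Ioo (0 : ℝ) 1 ∧ πlim p = 1}) / p ≤ 1 - πlim p := by
  intro p hp
  set S := {p | p ∈ Set.Ioo (0 : ℝ) 1 ∧ πlim p = 1} with hS
  have hbdd : BddAbove S := ⟨1, fun x hx => le_of_lt hx.1.2⟩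
  have hp0 : 0 < p := by
    rcases S.eq_empty_or_nonempty with h | ⟨x, hx⟩
    · have h0 : sSup S = 0 := by rw [h]; exact Real.sSup_empty
      have := hp.1; linarith
    · have h1 := le_csSup hbdd hx
      have := hp.1
      have := hx.1.1
      linarith
  have hpIoo : p ∈ Set.Ioo (0 : ℝ) 1 := ⟨hp0, hp.2⟩
  have hmem : ∀ m, 1 ≤ m → p * π p m ∈ S := by
    intro m hm
    have hq0 : 0 < p * π p m := mul_pos hp0 (hpos p hpIoo m)
    have hq1 : p * π p m < 1 := by
      have h1 := hle p hpIoo m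
      have h2 := hpos p hpIoo m
      nlinarith [hp.2]
    have hqIoo : (p * π p m) ∈ Set.Ioo (0 : ℝ) 1 := ⟨hq0, hq1⟩
    have hconst : ∀ n, 1 ≤ n → π (p * π p m) n = 1 := by
      intro n hn
      have h1 := hkey p hpIoo m n hm hn
      have h2 : π p (n + m) ≤ π p n := hanti p hpIoo (Nat.le_add_right n m)
      have h3 : 0 < π p (n + m) := hpos p hpIoo _
      have h4 : (1 : ℝ) ≤ π p n / π p (n + m) := (one_le_div h3).mpr h2
      have h5 := hle _ hqIoo n
      linarith
    refine ⟨hqIoo, ?_⟩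
    have htend : Tendsto (π (p * π p m)) atTop (nhds 1) := by
      have hev : π (p * π p m) =ᶠ[atTop] fun _ => (1 : ℝ) :=
        eventually_atTop.mpr ⟨1, hconst⟩
      exact Tendsto.congr' hev.symm tendsto_const_nhds
    exact tendsto_nhds_unique (hlim _ hqIoo) htend
  have hle' : ∀ m ≥ 1, p * π p m ≤ sSup S := fun m hm => le_csSup hbdd (hmem m hm)
  have hlim' : Tendsto (fun m => p * π p m) atTop (nhds (p * πlim p)) :=
    (hlim p hpIoo).const_mul p
  have hfin : p * πlim p ≤ sSup S :=
    le_of_tendsto hlim' (eventually_atTop.mpr ⟨1, hle'⟩)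
  rw [div_le_iff₀ hp0]
  nlinarith
end

section
/- Let π : (0,1) × ℕ → (0,1], written π_n(p), satisfy: π_n(p) is nonincreasing in n; π_n(p·π_m(p)) ≥ π_n(p)/π_{n+m}(p) for all p ∈ (0,1), m,n ≥ 1; and π_n(p) ≤ 1. Then for every p ∈ (0,1) and m ≥ 1: ∏_{i=1}^{k} π_{im}(p·π_m(p)) ≥ π_m(p)/π_{(k+1)m}(p) ≥ π_m(p) for every k ≥ 1, hence the infinite product ∏_{i≥1} π_{im}(p·π_m(p)) ≥ π_m(p). -/
open Filter Finset

theorem div_le_prod_Icc_of_div_le {α : Type*} [Field α] [LinearOrder α] [IsStrictOrderedRing α]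
    {a b : ℕ → α} (ha : ∀ i, 0 < a i) (hab : ∀ i, 1 ≤ i → a i / a (i + 1) ≤ b i) (k : ℕ) :
    a 1 / a (k + 1) ≤ ∏ i ∈ Icc 1 k, b i := by
  induction k with
  | zero => simp [div_self (ha 1).ne']
  | succ k ih =>
    have hratio : 0 < a (k + 1) / a (k + 2) := div_pos (ha _) (ha _)
    rw [prod_Icc_succ_top (by omega)]
    calc a 1 / a (k + 1 + 1) = a 1 / a (k + 1) * (a (k + 1) / a (k + 2)) := by
          field_simp [(ha (k + 1)).ne']
      _ ≤ (∏ i ∈ Icc 1 k, b i) * b (k + 1) :=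
          mul_le_mul ih (hab _ (by omega)) hratio.le ((div_pos (ha 1) (ha _)).le.trans ih)

theorem telescoping_lower_bound_general (π : ℝ → ℕ → ℝ)
    (hpos : ∀ p ∈ Set.Ioo (0 : ℝ) 1, ∀ n, 0 < π p n)
    (hle : ∀ p ∈ Set.Ioo (0 : ℝ) 1, ∀ n, π p n ≤ 1)
    (hkey : ∀ p ∈ Set.Ioo (0 : ℝ) 1, ∀ m n : ℕ, 1 ≤ m → 1 ≤ n →
      π p n / π p (n + m) ≤ π (p * π p m) n) :
    ∀ p ∈ Set.Ioo (0 : ℝ) 1, ∀ m : ℕ, 1 ≤ m → ∀ k : ℕ, 1 ≤ k →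
      (π p m / π p ((k + 1) * m) ≤ ∏ i ∈ Finset.Icc 1 k, π (p * π p m) (i * m)) ∧
        π p m ≤ ∏ i ∈ Finset.Icc 1 k, π (p * π p m) (i * m) ∧
        ∀ L : ℝ, Tendsto (fun k => ∏ i ∈ Finset.Icc 1 k, π (p * π p m) (i * m))
            atTop (nhds L) → π p m ≤ L := by
  intro p hp m hm
  have htelescope (k : ℕ) :
      π p m / π p ((k + 1) * m) ≤ ∏ i ∈ Icc 1 k, π (p * π p m) (i * m) := by
    have hstep (i : ℕ) (hi : 1 ≤ i) : π p (i * m) / π p ((i + 1) * m) ≤ π (p * π p m) (i * m) := by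
      rw [add_one_mul]
      exact hkey p hp m (i * m) hm (Nat.one_le_iff_ne_zero.2 (by positivity))
    simpa only [one_mul] using
      div_le_prod_Icc_of_div_le (a := fun i ↦ π p (i * m)) (fun i ↦ hpos p hp _) hstep k
  have hbound (k : ℕ) : π p m ≤ ∏ i ∈ Icc 1 k, π (p * π p m) (i * m) :=
    (le_div_self (hpos p hp m).le (hpos p hp _) (hle p hp _)).trans (htelescope k)
  exact fun k _ ↦ ⟨htelescope k, hbound k, fun L hL ↦ ge_of_tendsto' hL hbound⟩

theorem telescoping_lower_bound (π : ℝ → ℕ → ℝ)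
    (hpos : ∀ p ∈ Set.Ioo (0 : ℝ) 1, ∀ n, 0 < π p n)
    (hle : ∀ p ∈ Set.Ioo (0 : ℝ) 1, ∀ n, π p n ≤ 1)
    (hanti : ∀ p ∈ Set.Ioo (0 : ℝ) 1, Antitone (π p))
    (hkey : ∀ p ∈ Set.Ioo (0 : ℝ) 1, ∀ m n : ℕ, 1 ≤ m → 1 ≤ n →
      π p n / π p (n + m) ≤ π (p * π p m) n) :
    ∀ p ∈ Set.Ioo (0 : ℝ) 1, ∀ m : ℕ, 1 ≤ m → ∀ k : ℕ, 1 ≤ k →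
      (π p m / π p ((k + 1) * m) ≤ ∏ i ∈ Finset.Icc 1 k, π (p * π p m) (i * m)) ∧
        π p m ≤ ∏ i ∈ Finset.Icc 1 k, π (p * π p m) (i * m) ∧
        ∀ L : ℝ, Tendsto (fun k => ∏ i ∈ Finset.Icc 1 k, π (p * π p m) (i * m))
            atTop (nhds L) → π p m ≤ L :=
  telescoping_lower_bound_general π hpos hle hkey
end

section
/- Suppose there exist constants c, C > 0 with θ_n(p_c) ≤ C/n² for all n ≥ 1, and suppose Theorem 1 holds: θ_{2n}(p - 2θ_m(p)) ≤ C₀·θ_n(p)/2^{n/m} for all p ∈ [0,1], m,n ≥ 1, with θ monotone in each variable. Then there exist constants c', C', ε₀ > 0 such that for every ε ∈ (0, ε₀) and n ≥ 1, θ_n(p_c - ε) ≤ (C'/n²)·exp(-c'·√ε·n). -/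
/-!
Take `m = ⌈√(2C) / √ε⌉₊`, so that `2 θ_m(p_c) ≤ 2C / m² ≤ ε` by the critical one-arm bound.
Then `p_c - ε ≤ p_c - 2 θ_m(p_c)`, and Theorem 1 at `p = p_c` with `n = ⌊N/2⌋` gives
`θ_N(p_c - ε) ≤ C₀ θ_n(p_c) 2^{-n/m}`. Since `m < 2√(2C)/√ε` and `n ≥ N/3`, the factor
`2^{-n/m}` is at most `exp (-(log 2 / (6√(2C))) √ε N)`, while `θ_n(p_c) ≤ C/n² ≤ 9C/N²`.
For `N = 1` there is no such `n`, and `θ_1(p_c - ε) ≤ θ_1(p_c) ≤ C` suffices.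
-/

open Real Set

theorem theta_sub_le_of_two_mul_theta_le {θ : ℝ → ℕ → ℝ} {C₀ : ℝ}
    (hmono : ∀ n, Monotone (fun p => θ p n)) (hanti : ∀ p, Antitone (θ p))
    (hkey : ∀ p ∈ Icc (0 : ℝ) 1, ∀ m n : ℕ, 1 ≤ m → 1 ≤ n →
      θ (p - 2 * θ p m) (2 * n) ≤ C₀ * θ p n / 2 ^ ((n : ℝ) / m))
    {p ε : ℝ} (hp : p ∈ Icc (0 : ℝ) 1) {m n N : ℕ} (hm : 1 ≤ m) (hn : 1 ≤ n) (hN : 2 * n ≤ N)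
    (hε : 2 * θ p m ≤ ε) :
    θ (p - ε) N ≤ C₀ * θ p n / 2 ^ ((n : ℝ) / m) :=
  calc θ (p - ε) N ≤ θ (p - ε) (2 * n) := hanti _ hN
    _ ≤ θ (p - 2 * θ p m) (2 * n) := hmono _ (by linarith)
    _ ≤ C₀ * θ p n / 2 ^ ((n : ℝ) / m) := hkey p hp m n hm hn

theorem exists_nat_le_lt_two_mul {x : ℝ} (hx : 1 < x) :
    ∃ m : ℕ, 0 < m ∧ x ≤ m ∧ (m : ℝ) < 2 * x :=
  ⟨⌈x⌉₊, Nat.ceil_pos.2 (by linarith), Nat.le_ceil x, Nat.ceil_lt_two_mul (by linarith)⟩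

theorem two_mul_div_sq_le {C ε : ℝ} {m : ℕ} (hC : 0 < C) (hε : 0 < ε)
    (hm : √(2 * C) / √ε ≤ m) :
    2 * (C / (m : ℝ) ^ 2) ≤ ε := by
  have hmε : √(2 * C) ≤ m * √ε := (div_le_iff₀ (sqrt_pos.2 hε)).1 hm
  have hsq : 2 * C ≤ (m : ℝ) ^ 2 * ε := by
    have := pow_le_pow_left₀ (sqrt_nonneg _) hmε 2
    rwa [mul_pow, sq_sqrt (by positivity), sq_sqrt hε.le] at this
  have hm0 : (0 : ℝ) < (m : ℝ) ^ 2 := by nlinarith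
  rw [← mul_div_assoc, div_le_iff₀ hm0]
  linarith

theorem div_sq_le_nine_mul_div_sq {C : ℝ} {n N : ℕ} (hC : 0 ≤ C) (hN0 : 0 < N)
    (hN : (N : ℝ) ≤ 3 * n) :
    C / (n : ℝ) ^ 2 ≤ 9 * C / (N : ℝ) ^ 2 := by
  have hN0' : (0 : ℝ) < N := by exact_mod_cast hN0
  rw [div_le_div_iff₀ (by nlinarith) (by positivity)]
  nlinarith [mul_self_le_mul_self hN0'.le hN]

theorem inv_two_rpow_le_exp {K ε : ℝ} {m n N : ℕ} (hK : 0 < K) (hε : 0 < ε) (hm0 : 0 < m)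
    (hm : (m : ℝ) < 2 * (K / √ε)) (hN : (N : ℝ) ≤ 3 * n) :
    ((2 : ℝ) ^ ((n : ℝ) / m))⁻¹ ≤ exp (-(log 2 / (6 * K)) * √ε * N) := by
  have hmε : m * √ε < 2 * K := by
    rw [← mul_div_assoc] at hm
    exact (lt_div_iff₀ (sqrt_pos.2 hε)).1 hm
  have hm0' : (0 : ℝ) < m := by exact_mod_cast hm0
  have hratio : √ε * N / (6 * K) ≤ n / m := by
    rw [div_le_div_iff₀ (by positivity) hm0']
    nlinarith [sqrt_nonneg ε, Nat.cast_nonneg (α := ℝ) n]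
  rw [rpow_def_of_pos two_pos, ← exp_neg, exp_le_exp]
  have := mul_le_mul_of_nonneg_left hratio (log_pos one_lt_two).le
  linarith [show log 2 / (6 * K) * √ε * N = log 2 * (√ε * N / (6 * K)) by ring]

theorem le_two_mul_mul_exp_neg {a x : ℝ} (ha : 0 ≤ a) (hx : x ≤ log 2) :
    a ≤ 2 * a * exp (-x) := by
  have : exp (-log 2) ≤ exp (-x) := exp_le_exp.2 (by linarith)
  rw [exp_neg, exp_log two_pos] at this
  nlinarith

theorem theta_sub_le_of_one_arm_bound {θ : ℝ → ℕ → ℝ} {p C C₀ K ε : ℝ}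
    (hmono : ∀ n, Monotone (fun p => θ p n)) (hanti : ∀ p, Antitone (θ p))
    (hkey : ∀ p ∈ Icc (0 : ℝ) 1, ∀ m n : ℕ, 1 ≤ m → 1 ≤ n →
      θ (p - 2 * θ p m) (2 * n) ≤ C₀ * θ p n / 2 ^ ((n : ℝ) / m))
    (hp : p ∈ Icc (0 : ℝ) 1) (hC : 0 ≤ C) (hC₀ : 0 ≤ C₀)
    (hcrit : ∀ n : ℕ, 1 ≤ n → θ p n ≤ C / n ^ 2) (hK : 0 < K) (hε : 0 < ε)
    {m N : ℕ} (hm0 : 0 < m) (hm : (m : ℝ) < 2 * (K / √ε)) (hθ : 2 * θ p m ≤ ε) (hN : 2 ≤ N) :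
    θ (p - ε) N ≤ 9 * C₀ * C / N ^ 2 * exp (-(log 2 / (6 * K)) * √ε * N) := by
  have hN3 : (N : ℝ) ≤ 3 * (N / 2 : ℕ) := by exact_mod_cast (by omega : N ≤ 3 * (N / 2))
  calc θ (p - ε) N
      ≤ C₀ * θ p (N / 2) / 2 ^ (((N / 2 : ℕ) : ℝ) / m) :=
        theta_sub_le_of_two_mul_theta_le hmono hanti hkey hp hm0 (by omega) (Nat.mul_div_le N 2) hθ
    _ ≤ C₀ * (9 * C / N ^ 2) * exp (-(log 2 / (6 * K)) * √ε * N) := by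
        rw [div_eq_mul_inv]
        gcongr
        · exact (hcrit _ (by omega)).trans (div_sq_le_nine_mul_div_sq hC (by omega) hN3)
        · exact inv_two_rpow_le_exp hK hε hm0 hm hN3
    _ = 9 * C₀ * C / N ^ 2 * exp (-(log 2 / (6 * K)) * √ε * N) := by ring

theorem near_critical_sharpness_upper_general (θ : ℝ → ℕ → ℝ) (p_c C C₀ : ℝ)
    (hpc : p_c ∈ Set.Ioo (0 : ℝ) 1) (hC : 0 < C) (hC₀ : 0 < C₀)
    (hmono : ∀ n, Monotone (fun p => θ p n))
    (hanti : ∀ p, Antitone (θ p))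
    (hcrit : ∀ n : ℕ, 1 ≤ n → θ p_c n ≤ C / n ^ 2)
    (hkey : ∀ p ∈ Set.Icc (0 : ℝ) 1, ∀ m n : ℕ, 1 ≤ m → 1 ≤ n →
      θ (p - 2 * θ p m) (2 * n) ≤ C₀ * θ p n / 2 ^ ((n : ℝ) / m)) :
    ∃ c' > (0 : ℝ), ∃ C' > (0 : ℝ), ∃ ε₀ > (0 : ℝ), ∀ ε ∈ Set.Ioo (0 : ℝ) ε₀, ∀ n : ℕ, 1 ≤ n →
      θ (p_c - ε) n ≤ C' / n ^ 2 * Real.exp (-c' * Real.sqrt ε * n) := by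
  set K := √(2 * C)
  have hK : 0 < K := sqrt_pos.2 (by linarith)
  refine ⟨log 2 / (6 * K), by positivity, (9 * C₀ + 2) * C, by positivity, 2 * C, by linarith, ?_⟩
  rintro ε ⟨hε, hεC⟩ N hN
  have hεK : √ε < K := sqrt_lt_sqrt hε.le hεC
  rcases hN.eq_or_lt with rfl | hN2
  · have hrate : log 2 / (6 * K) * √ε ≤ log 2 := by
      calc log 2 / (6 * K) * √ε ≤ log 2 / (6 * K) * K := by gcongr
        _ = log 2 / 6 := by field_simp
        _ ≤ log 2 := by linarith [log_pos one_lt_two]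
    simp only [Nat.cast_one, one_pow, div_one, mul_one, neg_mul]
    calc θ (p_c - ε) 1 ≤ θ p_c 1 := hmono 1 (by linarith)
      _ ≤ C := by simpa using hcrit 1 le_rfl
      _ ≤ 2 * C * exp (-(log 2 / (6 * K) * √ε)) := le_two_mul_mul_exp_neg hC.le hrate
      _ ≤ (9 * C₀ + 2) * C * exp (-(log 2 / (6 * K) * √ε)) := by gcongr; linarith
  obtain ⟨m, hm0, hKm, hm⟩ := exists_nat_le_lt_two_mul ((one_lt_div (sqrt_pos.2 hε)).2 hεK)
  have hθ : 2 * θ p_c m ≤ ε :=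
    (mul_le_mul_of_nonneg_left (hcrit m hm0) two_pos.le).trans (two_mul_div_sq_le hC hε hKm)
  calc θ (p_c - ε) N
      ≤ 9 * C₀ * C / N ^ 2 * exp (-(log 2 / (6 * K)) * √ε * N) :=
        theta_sub_le_of_one_arm_bound hmono hanti hkey (Ioo_subset_Icc_self hpc) hC.le hC₀.le
          hcrit hK hε hm0 hm hθ hN2
    _ ≤ (9 * C₀ + 2) * C / N ^ 2 * exp (-(log 2 / (6 * K)) * √ε * N) := by
        gcongr ?_ / _ * _
        nlinarith

theorem near_critical_sharpness_upper (θ : ℝ → ℕ → ℝ) (p_c C C₀ : ℝ)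
    (hpc : p_c ∈ Set.Ioo (0 : ℝ) 1) (hC : 0 < C) (hC₀ : 0 < C₀)
    (hrange : ∀ p ∈ Set.Icc (0 : ℝ) 1, ∀ n, θ p n ∈ Set.Icc (0 : ℝ) 1)
    (hneg : ∀ q < (0 : ℝ), ∀ n, θ q n = 0)
    (hmono : ∀ n, Monotone (fun p => θ p n))
    (hanti : ∀ p, Antitone (θ p))
    (hcrit : ∀ n : ℕ, 1 ≤ n → θ p_c n ≤ C / n ^ 2)
    (hkey : ∀ p ∈ Set.Icc (0 : ℝ) 1, ∀ m n : ℕ, 1 ≤ m → 1 ≤ n →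
      θ (p - 2 * θ p m) (2 * n) ≤ C₀ * θ p n / 2 ^ ((n : ℝ) / m)) :
    ∃ c' > (0 : ℝ), ∃ C' > (0 : ℝ), ∃ ε₀ > (0 : ℝ), ∀ ε ∈ Set.Ioo (0 : ℝ) ε₀, ∀ n : ℕ, 1 ≤ n →
      θ (p_c - ε) n ≤ C' / n ^ 2 * Real.exp (-c' * Real.sqrt ε * n) :=
  near_critical_sharpness_upper_general θ p_c C C₀ hpc hC hC₀ hmono hanti hcrit hkey
end
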